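/- Let N be a network over time with unit costs (c_a = 1 for all arcs a) and time horizon T ∈ ℕ. If f is a temporally repeated flow of maximum value with time horizon T that has the earliest arrival property (i.e., for every θ ∈ [0, T], the amount arr_f(θ) of flow arrived at the sink by time θ is maximum among all feasible flows over time with horizon T), then f has minimum peak cost among all temporally repeated flows of maximum value with horizon T. -/

import Mathlib

open MeasureTheory

/-- A network over time: a digraph with arc capacities `u`, costs `c`,
transit times `τ`, a source `s` and a sink `t`. -/
structure Network (V : Type) (A : Type) where
  tail : A → V
  head : A → V
  u : A → ℕ
  c : A → ℕ
  τ : A → ℕ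
  s : V
  t : V

namespace Network

variable {V A : Type}

/-- The node sequence visited by a list of arcs. -/
def nodes (N : Network V A) : List A → List V
  | [] => []
  | a :: rest => N.tail a :: ((a :: rest).map N.head)

/-- `p` is a simple `s`-`t` path (a non-empty list of consecutive arcs starting at
the source, ending at the sink and visiting pairwise distinct nodes). -/
def IsSTPath (N : Network V A) (p : List A) : Prop :=
  p ≠ [] ∧ List.Chain' (fun a b => N.head a = N.tail b) p ∧
    (∀ a ∈ p.head?, N.tail a = N.s) ∧ (∀ a ∈ p.getLast?, N.head a = N.t) ∧
    (N.nodes p).Nodup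

/-- `p` is a non-empty closed walk, i.e. a cycle. -/
def IsCycle (N : Network V A) (p : List A) : Prop :=
  p ≠ [] ∧ List.Chain' (fun a b => N.head a = N.tail b) p ∧
    ∀ a ∈ p.head?, ∀ b ∈ p.getLast?, N.head b = N.tail a

/-- The network contains no directed cycle. -/
def Acyclic (N : Network V A) : Prop := ∀ p : List A, ¬ N.IsCycle p

/-- Transit time (length) of a path. -/
def pathTime (N : Network V A) (p : List A) : ℕ := (p.map N.τ).sum

/-- Bottleneck capacity of a path. -/
noncomputable def bottleneck (N : Network V A) (p : List A) : ℕ :=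
  sInf (N.u '' {a | a ∈ p})

section
variable [DecidableEq A]

/-- Transit time of the part of `p` strictly before arc `a`. -/
def prefixTime (N : Network V A) (p : List A) (a : A) : ℕ :=
  ((p.takeWhile fun b => b ≠ a).map N.τ).sum

/-- Transit time of the part of `p` from arc `a` onwards. -/
def suffixTime (N : Network V A) (p : List A) (a : A) : ℕ :=
  ((p.dropWhile fun b => b ≠ a).map N.τ).sum

/-- Inflow rate into arc `a` at time `θ` of the temporally repeated flow with
horizon `T` induced by the path decomposition `y`. -/
noncomputable def trRate (N : Network V A) (y : List A → ℝ) (T : ℝ) (a : A) (θ : ℝ) : ℝ :=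
  ∑ᶠ p ∈ {p : List A | N.IsSTPath p ∧ (N.pathTime p : ℝ) ≤ T ∧ a ∈ p ∧
    (N.prefixTime p a : ℝ) ≤ θ ∧ (N.suffixTime p a : ℝ) < T - θ}, y p

/-- Static flow on arc `a` induced by the path decomposition `y`. -/
noncomputable def staticOf (N : Network V A) (y : List A → ℝ) (a : A) : ℝ :=
  ∑ᶠ p ∈ {p : List A | a ∈ p}, y p

/-- `y` is a feasible (capacity-respecting) path decomposition of a static flow. -/
def IsDecomposition (N : Network V A) (y : List A → ℝ) : Prop :=
  (∀ p, 0 ≤ y p) ∧ (∀ p, y p ≠ 0 → N.IsSTPath p) ∧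
    (Function.support y).Finite ∧ ∀ a : A, N.staticOf y a ≤ N.u a

/-- Value of the temporally repeated flow induced by `y` with horizon `T`. -/
noncomputable def trValue (N : Network V A) (y : List A → ℝ) (T : ℝ) : ℝ :=
  ∑ᶠ p ∈ {p : List A | N.IsSTPath p ∧ (N.pathTime p : ℝ) ≤ T}, y p * (T - N.pathTime p)

/-- Amount of flow of the TR flow induced by `y` that has reached the sink by time `θ`. -/
noncomputable def arrTR (N : Network V A) (y : List A → ℝ) (θ : ℝ) : ℝ :=
  ∑ᶠ p ∈ {p : List A | N.IsSTPath p ∧ (N.pathTime p : ℝ) ≤ θ}, y p * (θ - N.pathTime p)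

end

/-- All flow rates of the decomposition are (nonnegative) integers. -/
def IsIntegral (y : List A → ℝ) : Prop := ∀ p, ∃ n : ℕ, y p = n

section
variable [Fintype A]

/-- Cost of a flow over time `f` at time point `θ`. -/
noncomputable def costAt (N : Network V A) (f : A → ℝ → ℝ) (θ : ℝ) : ℝ :=
  ∑ a : A, (N.c a : ℝ) * ∫ ξ in (θ - (N.τ a : ℝ))..θ, f a ξ

/-- Peak cost of a flow over time `f` with horizon `T`. -/
noncomputable def peakCost (N : Network V A) (f : A → ℝ → ℝ) (T : ℝ) : ℝ :=
  sSup (N.costAt f '' Set.Ico 0 T)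

/-- Peak cost of the TR flow induced by the decomposition `y`. -/
noncomputable def trPeakCost [DecidableEq A] (N : Network V A) (y : List A → ℝ) (T : ℝ) : ℝ :=
  N.peakCost (N.trRate y T) T

variable [DecidableEq V]

/-- Cumulative flow having entered node `v` by time `θ`. -/
noncomputable def inflowBy (N : Network V A) (f : A → ℝ → ℝ) (v : V) (θ : ℝ) : ℝ :=
  ∑ a ∈ Finset.univ.filter (fun a => N.head a = v), ∫ ξ in (0:ℝ)..(θ - (N.τ a : ℝ)), f a ξ

/-- Cumulative flow having left node `v` by time `θ`. -/
noncomputable def outflowBy (N : Network V A) (f : A → ℝ → ℝ) (v : V) (θ : ℝ) : ℝ :=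
  ∑ a ∈ Finset.univ.filter (fun a => N.tail a = v), ∫ ξ in (0:ℝ)..θ, f a ξ

/-- A feasible flow over time with horizon `T`. -/
def IsFlowOverTime (N : Network V A) (T : ℝ) (f : A → ℝ → ℝ) : Prop :=
  (∀ a, Measurable (f a)) ∧ (∀ a θ, 0 ≤ f a θ) ∧ (∀ a θ, f a θ ≤ N.u a) ∧
    (∀ a θ, T - (N.τ a : ℝ) < θ → f a θ = 0) ∧ (∀ a θ, θ < 0 → f a θ = 0) ∧
    ∀ v, v ≠ N.s → v ≠ N.t → ∀ θ ∈ Set.Ico (0:ℝ) T,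
      N.outflowBy f v θ ≤ N.inflowBy f v θ

/-- Value of a flow over time with horizon `T`. -/
noncomputable def fotValue (N : Network V A) (T : ℝ) (f : A → ℝ → ℝ) : ℝ :=
  N.outflowBy f N.s T - N.inflowBy f N.s T

/-- Amount of flow of a flow over time arrived at the sink by time `θ`. -/
noncomputable def arrivedBy (N : Network V A) (f : A → ℝ → ℝ) (θ : ℝ) : ℝ :=
  N.inflowBy f N.t θ - N.outflowBy f N.t θ

/-- Feasibility of a static `s`-`t` flow. -/
def IsStaticFlow (N : Network V A) (x : A → ℝ) : Prop :=
  (∀ a, 0 ≤ x a) ∧ (∀ a, x a ≤ N.u a) ∧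
    ∀ v, v ≠ N.s → v ≠ N.t →
      ∑ a ∈ Finset.univ.filter (fun a => N.head a = v), x a =
      ∑ a ∈ Finset.univ.filter (fun a => N.tail a = v), x a

/-- Value of a static `s`-`t` flow. -/
noncomputable def staticValue (N : Network V A) (x : A → ℝ) : ℝ :=
  ∑ a ∈ Finset.univ.filter (fun a => N.tail a = N.s), x a -
  ∑ a ∈ Finset.univ.filter (fun a => N.head a = N.s), x a

end

end Network

/-!
With unit costs, `costAt f θ` is the amount of flow in transit at time `θ`. In the temporally
repeated flow of `y` with horizon `T`, by time `θ ∈ [0, T]` a path `p` has sent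
`y p * min θ (T - τ p)` units and delivered `y p * max 0 (θ - τ p)` of them (summation by parts
along `p`), so the cost at `θ` is `val - arr (T - θ) - arr θ`. Among temporally repeated flows of
the same value the cost is therefore pointwise smallest for the one whose arrivals dominate, and
the earliest arrival property says that the arrivals of `y` dominate those of every feasible flow
over time, in particular of every temporally repeated one.
-/

lemma csSup_image_le_csSup_image {α β : Type*} [ConditionallyCompleteLattice β] {s : Set α}
    {f g : α → β} (hg : BddAbove (g '' s)) (h : ∀ x ∈ s, f x ≤ g x) :
    sSup (f '' s) ≤ sSup (g '' s) := by
  rw [Set.image_eq_range] at hg ⊢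
  rw [Set.image_eq_range]
  exact ciSup_mono hg fun x => h x x.2

lemma sum_univ_ite_mem_eq_sum_map {A M : Type*} [Fintype A] [DecidableEq A] [AddCommMonoid M]
    {p : List A} (hp : p.Nodup) (g : A → M) : ∑ a, (if a ∈ p then g a else 0) = (p.map g).sum := by
  rw [← List.sum_toFinset g hp, ← Finset.sum_filter]
  congr 1
  ext
  simp

lemma finsum_mem_eq_sum_indicator {α M : Type*} [AddCommMonoid M] {f : α → M} {t : Finset α}
    (hf : Function.support f ⊆ t) (s : Set α) : ∑ᶠ i ∈ s, f i = ∑ i ∈ t, s.indicator f i := by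
  rw [finsum_mem_def]
  exact finsum_eq_sum_of_support_subset _
    (Set.support_indicator.subset.trans (Set.inter_subset_right.trans hf))

noncomputable def ramp (D x : ℝ) : ℝ := max 0 (min D x)

lemma ramp_of_le {D x : ℝ} (h : x ≤ D) : ramp D x = max 0 x := by
  rw [ramp, min_eq_right h]

lemma ramp_eq_max_sub_max (D : ℝ) {x : ℝ} (hx : 0 ≤ x) :
    ramp D x = max 0 D - max 0 (D - x) := by
  simp only [ramp, max_def, min_def]
  split_ifs <;> linarith

lemma volume_Ico_inter_Ioc (a b c d : ℝ) :
    volume (Set.Ico c d ∩ Set.Ioc a b) = ENNReal.ofReal (min b d - max a c) := by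
  apply le_antisymm
  · rw [← Real.volume_Icc]
    exact measure_mono fun x ⟨⟨hcx, hxd⟩, hax, hxb⟩ =>
      ⟨max_le hax.le hcx, le_min hxb hxd.le⟩
  · rw [← Real.volume_Ioo]
    refine measure_mono fun x ⟨hx₁, hx₂⟩ => ?_
    obtain ⟨hax, hcx⟩ := max_lt_iff.mp hx₁
    obtain ⟨hxb, hxd⟩ := lt_min_iff.mp hx₂
    exact ⟨⟨hcx.le, hxd⟩, hax, hxb.le⟩

lemma integral_indicator_Ico_one_of_le {a b : ℝ} (hab : a ≤ b) (c d : ℝ) :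
    ∫ ξ in a..b, (Set.Ico c d).indicator (fun _ => (1 : ℝ)) ξ =
      max 0 (min b d - max a c) := by
  rw [intervalIntegral.integral_of_le hab, integral_indicator_const _ measurableSet_Ico,
    measureReal_def, Measure.restrict_apply measurableSet_Ico, volume_Ico_inter_Ioc,
    ENNReal.toReal_ofReal', smul_eq_mul, mul_one, max_comm]

lemma integral_zero_indicator_Ico_one {c : ℝ} (hc : 0 ≤ c) (d β : ℝ) :
    ∫ ξ in (0 : ℝ)..β, (Set.Ico c d).indicator (fun _ => (1 : ℝ)) ξ = ramp (d - c) (β - c) := by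
  rcases le_total 0 β with hβ | hβ
  · rw [integral_indicator_Ico_one_of_le hβ, max_eq_right hc, ramp, min_sub_sub_right, min_comm]
  · rw [intervalIntegral.integral_symm, integral_indicator_Ico_one_of_le hβ,
      max_eq_right (hβ.trans hc), ramp, max_eq_left (by linarith [min_le_left 0 d]),
      max_eq_left (by linarith [min_le_right (d - c) (β - c)]), neg_zero]

namespace Network

variable {V A : Type}

section Paths

variable (N : Network V A)

lemma pathTime_cons (a : A) (l : List A) : N.pathTime (a :: l) = N.τ a + N.pathTime l := by
  simp [pathTime]

variable {N} in
lemma IsSTPath.nodup {p : List A} (hp : N.IsSTPath p) : p.Nodup := by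
  obtain ⟨-, -, -, -, hnd⟩ := hp
  cases p with
  | nil => exact List.nodup_nil
  | cons a l => exact (List.nodup_cons.mp hnd).2.of_map N.head

variable {N} in
lemma IsSTPath.source_ne_sink {p : List A} (hp : N.IsSTPath p) : N.s ≠ N.t := by
  obtain ⟨hne, -, hs, ht, hnd⟩ := hp
  obtain ⟨a, l, rfl⟩ := List.exists_cons_of_ne_nil hne
  have hlast : N.head ((a :: l).getLast (List.cons_ne_nil a l)) = N.t :=
    ht _ (List.getLast?_eq_some_getLast _)
  intro hst
  apply (List.nodup_cons.mp hnd).1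
  rw [hs a rfl, hst, ← hlast]
  exact List.mem_map_of_mem (List.getLast_mem _)

variable [DecidableEq A]

lemma prefixTime_cons_self (a : A) (l : List A) : N.prefixTime (a :: l) a = 0 := by
  simp [prefixTime]

lemma prefixTime_cons_of_ne {a b : A} (l : List A) (h : a ≠ b) :
    N.prefixTime (a :: l) b = N.τ a + N.prefixTime l b := by
  simp [prefixTime, h]

lemma prefixTime_add_suffixTime (p : List A) (a : A) :
    (N.prefixTime p a : ℝ) + N.suffixTime p a = N.pathTime p := by
  norm_cast
  rw [prefixTime, suffixTime, pathTime, ← List.sum_append, ← List.map_append,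
    List.takeWhile_append_dropWhile]

lemma τ_le_suffixTime {p : List A} {a : A} (h : a ∈ p) : N.τ a ≤ N.suffixTime p a := by
  induction p with
  | nil => simp at h
  | cons c l ih =>
    by_cases hca : c = a
    · subst hca
      simp [suffixTime]
    · have hal : a ∈ l := (List.mem_cons.mp h).resolve_left (Ne.symm hca)
      simpa [suffixTime, hca] using ih hal

/-- Summation by parts along a path: consecutive arcs share a node, and the entry time of an arc
is the exit time of its predecessor. -/
lemma sum_map_telescope (φ : V → ℝ) {p : List A} (hne : p ≠ [])
    (hchain : p.IsChain fun a b => N.head a = N.tail b) (hnd : p.Nodup) (M : ℝ → ℝ) {u w : V}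
    (hu : ∀ a ∈ p.head?, N.tail a = u) (hw : ∀ a ∈ p.getLast?, N.head a = w) :
    (p.map fun a => φ (N.tail a) * M (N.prefixTime p a) -
        φ (N.head a) * M (N.prefixTime p a + N.τ a)).sum =
      φ u * M 0 - φ w * M (N.pathTime p) := by
  induction p generalizing M u with
  | nil => exact absurd rfl hne
  | cons a l ih =>
    have hau : N.tail a = u := hu a rfl
    obtain ⟨hal, hndl⟩ := List.nodup_cons.mp hnd
    rw [List.map_cons, List.sum_cons, prefixTime_cons_self, Nat.cast_zero, zero_add, hau]
    rcases l with _ | ⟨c, l⟩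
    · simp [pathTime, hw a rfl]
    · obtain ⟨hac, hchain'⟩ := List.isChain_cons_cons.mp hchain
      have hrest := ih (List.cons_ne_nil c l) hchain' hndl (fun x => M (N.τ a + x))
        (u := N.head a) (by simp [hac]) (by simpa using hw)
      have hshift : ((c :: l).map fun b => φ (N.tail b) * M (N.prefixTime (a :: c :: l) b) -
            φ (N.head b) * M (N.prefixTime (a :: c :: l) b + N.τ b)) =
          (c :: l).map fun b => φ (N.tail b) * M (N.τ a + N.prefixTime (c :: l) b) -
            φ (N.head b) * M (N.τ a + (N.prefixTime (c :: l) b + N.τ b)) :=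
        List.map_congr_left fun b hb => by
          rw [prefixTime_cons_of_ne _ _ (ne_of_mem_of_not_mem hb hal).symm]
          push_cast
          rw [add_assoc]
      rw [hshift, hrest, add_zero, N.pathTime_cons a (c :: l)]
      push_cast
      ring

variable {N} in
lemma IsSTPath.sum_map_telescope (φ : V → ℝ) {p : List A} (hp : N.IsSTPath p) (M : ℝ → ℝ) :
    (p.map fun a => φ (N.tail a) * M (N.prefixTime p a) -
        φ (N.head a) * M (N.prefixTime p a + N.τ a)).sum =
      φ N.s * M 0 - φ N.t * M (N.pathTime p) :=
  N.sum_map_telescope φ hp.1 hp.2.1 hp.nodup M hp.2.2.1 hp.2.2.2.1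

end Paths

section Decomposition

variable {N : Network V A} {y : List A → ℝ}

noncomputable def IsDecomposition.paths (hy : N.IsDecomposition y) : Finset (List A) :=
  hy.2.2.1.toFinset

namespace IsDecomposition

lemma mem_paths (hy : N.IsDecomposition y) {p : List A} : p ∈ hy.paths ↔ y p ≠ 0 :=
  hy.2.2.1.mem_toFinset

lemma isSTPath_of_mem_paths (hy : N.IsDecomposition y) {p : List A} (hp : p ∈ hy.paths) :
    N.IsSTPath p :=
  hy.2.1 p (hy.mem_paths.1 hp)

lemma support_mul_subset (hy : N.IsDecomposition y) (g : List A → ℝ) :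
    Function.support (fun p => y p * g p) ⊆ hy.paths :=
  fun _ hp => hy.mem_paths.2 (left_ne_zero_of_mul hp)

end IsDecomposition

lemma arrTR_eq_sum (hy : N.IsDecomposition y) (θ : ℝ) :
    N.arrTR y θ = ∑ p ∈ hy.paths, y p * max 0 (θ - N.pathTime p) := by
  rw [arrTR, finsum_mem_eq_sum_indicator (hy.support_mul_subset _)]
  refine Finset.sum_congr rfl fun p hp => ?_
  by_cases hτ : (N.pathTime p : ℝ) ≤ θ
  · rw [Set.indicator_of_mem, max_eq_right (sub_nonneg.2 hτ)]
    exact ⟨hy.isSTPath_of_mem_paths hp, hτ⟩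
  · rw [Set.indicator_of_notMem (fun h => hτ h.2), max_eq_left (by linarith), mul_zero]

lemma arrTR_nonneg (hy : N.IsDecomposition y) (θ : ℝ) : 0 ≤ N.arrTR y θ := by
  rw [arrTR_eq_sum hy]
  exact Finset.sum_nonneg fun p _ => mul_nonneg (hy.1 p) (le_max_left _ _)

lemma staticOf_eq_sum [DecidableEq A] (hy : N.IsDecomposition y) (a : A) :
    N.staticOf y a = ∑ p ∈ hy.paths, if a ∈ p then y p else 0 := by
  rw [staticOf, finsum_mem_eq_sum_indicator (t := hy.paths) fun _ hp => hy.mem_paths.2 hp]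
  refine Finset.sum_congr rfl fun p _ => ?_
  by_cases ha : a ∈ p <;> simp [ha]

variable [DecidableEq A]

variable (N) in
/-- Unit-rate flow along `p` enters arc `a` during `[prefixTime, T - suffixTime)`; this window is
empty when `pathTime p > T`. -/
noncomputable def pathRate (T : ℝ) (p : List A) (a : A) : ℝ → ℝ :=
  if a ∈ p then (Set.Ico (N.prefixTime p a : ℝ) (T - N.suffixTime p a)).indicator fun _ => 1
  else 0

lemma pathRate_nonneg (T : ℝ) (p : List A) (a : A) (θ : ℝ) : 0 ≤ N.pathRate T p a θ := by
  unfold pathRate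
  split_ifs
  · exact Set.indicator_nonneg (fun _ _ => zero_le_one) θ
  · exact le_rfl

lemma pathRate_le (T : ℝ) (p : List A) (a : A) (θ : ℝ) :
    N.pathRate T p a θ ≤ if a ∈ p then 1 else 0 := by
  unfold pathRate
  split_ifs
  · exact Set.indicator_le_self' (fun _ _ => zero_le_one) θ
  · exact le_rfl

lemma pathRate_eq_zero {T : ℝ} {p : List A} {a : A} {θ : ℝ}
    (hθ : θ ∉ Set.Ico 0 (T - N.τ a)) : N.pathRate T p a θ = 0 := by
  unfold pathRate
  split_ifs with ha
  · refine Set.indicator_of_notMem (fun hmem => hθ ⟨?_, ?_⟩) _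
    · exact (Nat.cast_nonneg _).trans hmem.1
    · have : (N.τ a : ℝ) ≤ N.suffixTime p a := by exact_mod_cast N.τ_le_suffixTime ha
      linarith [hmem.2]
  · rfl

lemma measurable_pathRate (T : ℝ) (p : List A) (a : A) : Measurable (N.pathRate T p a) := by
  unfold pathRate
  split_ifs
  · exact measurable_const.indicator measurableSet_Ico
  · exact measurable_const

lemma intervalIntegrable_pathRate (T : ℝ) (p : List A) (a : A) (α β : ℝ) :
    IntervalIntegrable (N.pathRate T p a) volume α β := by
  unfold pathRate
  split_ifs
  · exact ((integrable_indicator_iff measurableSet_Ico).2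
      (integrableOn_const measure_Ico_lt_top.ne)).intervalIntegrable
  · exact intervalIntegrable_const

lemma integral_pathRate (T : ℝ) (p : List A) (a : A) (β : ℝ) :
    ∫ ξ in (0 : ℝ)..β, N.pathRate T p a ξ =
      if a ∈ p then ramp (T - N.pathTime p) (β - N.prefixTime p a) else 0 := by
  unfold pathRate
  split_ifs
  · rw [integral_zero_indicator_Ico_one (Nat.cast_nonneg _)]
    congr 1
    linarith [N.prefixTime_add_suffixTime p a]
  · exact intervalIntegral.integral_zero

lemma trRate_eq_sum (hy : N.IsDecomposition y) (T : ℝ) (a : A) (θ : ℝ) :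
    N.trRate y T a θ = ∑ p ∈ hy.paths, y p * N.pathRate T p a θ := by
  rw [trRate, finsum_mem_eq_sum_indicator (t := hy.paths) fun _ hp => hy.mem_paths.2 hp]
  refine Finset.sum_congr rfl fun p hp => ?_
  have hsplit := N.prefixTime_add_suffixTime p a
  by_cases ha : a ∈ p
  · by_cases hθ : θ ∈ Set.Ico (N.prefixTime p a : ℝ) (T - N.suffixTime p a)
    · rw [Set.indicator_of_mem, pathRate, if_pos ha, Set.indicator_of_mem hθ, mul_one]
      exact ⟨hy.isSTPath_of_mem_paths hp, by linarith [hθ.1, hθ.2], ha, hθ.1, by linarith [hθ.2]⟩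
    · rw [Set.indicator_of_notMem, pathRate, if_pos ha, Set.indicator_of_notMem hθ, mul_zero]
      exact fun ⟨_, _, _, hpre, hsuf⟩ => hθ ⟨hpre, by linarith⟩
  · rw [Set.indicator_of_notMem (fun h => ha h.2.2.1), pathRate, if_neg ha, Pi.zero_apply,
      mul_zero]

lemma measurable_trRate (hy : N.IsDecomposition y) (T : ℝ) (a : A) :
    Measurable (N.trRate y T a) := by
  simp_rw [funext (trRate_eq_sum hy T a)]
  exact Finset.measurable_sum _ fun p _ => (measurable_pathRate T p a).const_mul _

lemma intervalIntegrable_trRate (hy : N.IsDecomposition y) (T : ℝ) (a : A) (α β : ℝ) :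
    IntervalIntegrable (N.trRate y T a) volume α β := by
  have hsum : N.trRate y T a = ∑ p ∈ hy.paths, fun θ => y p * N.pathRate T p a θ :=
    funext fun θ => by rw [trRate_eq_sum hy, Finset.sum_apply]
  rw [hsum]
  exact IntervalIntegrable.sum _ fun p _ => (intervalIntegrable_pathRate T p a α β).const_mul _

lemma integral_trRate (hy : N.IsDecomposition y) (T : ℝ) (a : A) (β : ℝ) :
    ∫ ξ in (0 : ℝ)..β, N.trRate y T a ξ = ∑ p ∈ hy.paths,
      y p * if a ∈ p then ramp (T - N.pathTime p) (β - N.prefixTime p a) else 0 := by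
  simp_rw [trRate_eq_sum hy]
  rw [intervalIntegral.integral_finsetSum fun p _ =>
    (intervalIntegrable_pathRate T p a 0 β).const_mul _]
  simp_rw [intervalIntegral.integral_const_mul, integral_pathRate]

lemma trRate_le_staticOf (hy : N.IsDecomposition y) (T : ℝ) (a : A) (θ : ℝ) :
    N.trRate y T a θ ≤ N.staticOf y a := by
  rw [trRate_eq_sum hy, staticOf_eq_sum hy]
  refine Finset.sum_le_sum fun p _ => ?_
  calc y p * N.pathRate T p a θ ≤ y p * if a ∈ p then 1 else 0 :=
        mul_le_mul_of_nonneg_left (pathRate_le T p a θ) (hy.1 p)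
    _ = if a ∈ p then y p else 0 := by rw [mul_ite, mul_one, mul_zero]

lemma trRate_eq_zero (hy : N.IsDecomposition y) {T : ℝ} {a : A} {θ : ℝ}
    (hθ : θ ∉ Set.Ico 0 (T - N.τ a)) : N.trRate y T a θ = 0 := by
  rw [trRate_eq_sum hy]
  exact Finset.sum_eq_zero fun p _ => by rw [pathRate_eq_zero hθ, mul_zero]

end Decomposition

section FlowOverTime

variable {N : Network V A} [Fintype A]

variable (N) in
/-- `∑ v, φ v * (outflow from v by time θ - inflow into v by time θ)`, written arc by arc. -/
noncomputable def weightedNetOutflow (φ : V → ℝ) (f : A → ℝ → ℝ) (θ : ℝ) : ℝ :=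
  ∑ a, (φ (N.tail a) * (∫ ξ in (0 : ℝ)..θ, f a ξ) -
    φ (N.head a) * ∫ ξ in (0 : ℝ)..θ - N.τ a, f a ξ)

lemma outflowBy_sub_inflowBy [DecidableEq V] (f : A → ℝ → ℝ) (v : V) (θ : ℝ) :
    N.outflowBy f v θ - N.inflowBy f v θ =
      N.weightedNetOutflow (fun w => if w = v then 1 else 0) f θ := by
  simp only [outflowBy, inflowBy, weightedNetOutflow, Finset.sum_filter, ite_mul, one_mul,
    zero_mul, Finset.sum_sub_distrib]

lemma costAt_eq_weightedNetOutflow (hc : ∀ a, N.c a = 1) {f : A → ℝ → ℝ}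
    (hf : ∀ a α β, IntervalIntegrable (f a) volume α β) (θ : ℝ) :
    N.costAt f θ = N.weightedNetOutflow 1 f θ := by
  simp only [costAt, weightedNetOutflow, hc, Nat.cast_one, Pi.one_apply, one_mul]
  exact Finset.sum_congr rfl fun a _ =>
    (intervalIntegral.integral_interval_sub_left (hf a 0 θ) (hf a 0 (θ - N.τ a))).symm

lemma peakCost_mono {f g : A → ℝ → ℝ} {T : ℝ} (hg : BddAbove (N.costAt g '' Set.Ico 0 T))
    (h : ∀ θ ∈ Set.Ico 0 T, N.costAt f θ ≤ N.costAt g θ) : N.peakCost f T ≤ N.peakCost g T :=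
  csSup_image_le_csSup_image hg h

variable [DecidableEq A] {y : List A → ℝ}

lemma weightedNetOutflow_trRate (hy : N.IsDecomposition y) (φ : V → ℝ) (T θ : ℝ) :
    N.weightedNetOutflow φ (N.trRate y T) θ = ∑ p ∈ hy.paths,
      y p * (φ N.s * ramp (T - N.pathTime p) θ -
        φ N.t * ramp (T - N.pathTime p) (θ - N.pathTime p)) := by
  simp only [weightedNetOutflow, integral_trRate hy, Finset.mul_sum, ← Finset.sum_sub_distrib]
  rw [Finset.sum_comm]
  refine Finset.sum_congr rfl fun p hp => ?_
  have hst := hy.isSTPath_of_mem_paths hp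
  have htele := hst.sum_map_telescope φ fun x => y p * ramp (T - N.pathTime p) (θ - x)
  rw [← sum_univ_ite_mem_eq_sum_map hst.nodup] at htele
  convert htele using 1
  · refine Finset.sum_congr rfl fun a _ => ?_
    split_ifs
    · rw [sub_sub θ, add_comm (N.τ a : ℝ)]
    · simp only [mul_zero, sub_zero]
  · rw [sub_zero]
    ring

lemma costAt_trRate (hc : ∀ a, N.c a = 1) (hy : N.IsDecomposition y) {T θ : ℝ} (h0 : 0 ≤ θ)
    (hT : θ ≤ T) : N.costAt (N.trRate y T) θ = N.arrTR y T - N.arrTR y (T - θ) - N.arrTR y θ := by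
  rw [costAt_eq_weightedNetOutflow hc (intervalIntegrable_trRate hy T),
    weightedNetOutflow_trRate hy, arrTR_eq_sum hy, arrTR_eq_sum hy, arrTR_eq_sum hy,
    ← Finset.sum_sub_distrib, ← Finset.sum_sub_distrib]
  refine Finset.sum_congr rfl fun p _ => ?_
  rw [Pi.one_apply, Pi.one_apply, ramp_eq_max_sub_max _ h0, ramp_of_le (by linarith),
    sub_right_comm T θ]
  ring

lemma bddAbove_costAt_trRate (hc : ∀ a, N.c a = 1) (hy : N.IsDecomposition y) (T : ℝ) :
    BddAbove (N.costAt (N.trRate y T) '' Set.Ico 0 T) := by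
  refine ⟨N.arrTR y T, ?_⟩
  rintro _ ⟨θ, hθ, rfl⟩
  rw [costAt_trRate hc hy hθ.1 hθ.2.le]
  linarith [arrTR_nonneg hy (T - θ), arrTR_nonneg hy θ]

variable [DecidableEq V]

lemma trRate_outflowBy_eq_inflowBy (hy : N.IsDecomposition y) (T : ℝ) {v : V} (hs : v ≠ N.s)
    (ht : v ≠ N.t) (θ : ℝ) : N.outflowBy (N.trRate y T) v θ = N.inflowBy (N.trRate y T) v θ := by
  rw [← sub_eq_zero, outflowBy_sub_inflowBy, weightedNetOutflow_trRate hy]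
  simp [hs.symm, ht.symm]

lemma isFlowOverTime_trRate (hy : N.IsDecomposition y) (T : ℝ) :
    N.IsFlowOverTime T (N.trRate y T) := by
  refine ⟨measurable_trRate hy T, fun a θ => ?_, fun a θ => (trRate_le_staticOf hy T a θ).trans
    (hy.2.2.2 a), fun a θ hθ => trRate_eq_zero hy fun h => hθ.not_gt h.2,
    fun a θ hθ => trRate_eq_zero hy fun h => hθ.not_ge h.1,
    fun v hs ht θ _ => (trRate_outflowBy_eq_inflowBy hy T hs ht θ).le⟩
  rw [trRate_eq_sum hy]
  exact Finset.sum_nonneg fun p _ => mul_nonneg (hy.1 p) (pathRate_nonneg T p a θ)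

lemma arrivedBy_trRate (hy : N.IsDecomposition y) {T θ : ℝ} (hθ : θ ≤ T) :
    N.arrivedBy (N.trRate y T) θ = N.arrTR y θ := by
  rw [arrivedBy, ← neg_sub, outflowBy_sub_inflowBy, weightedNetOutflow_trRate hy, arrTR_eq_sum hy,
    ← Finset.sum_neg_distrib]
  refine Finset.sum_congr rfl fun p hp => ?_
  rw [if_neg (hy.isSTPath_of_mem_paths hp).source_ne_sink, if_pos rfl,
    ramp_of_le (sub_le_sub_right hθ _)]
  ring

end FlowOverTime

end Network

open Network

theorem stmt18_general {V A : Type} [DecidableEq V] [DecidableEq A] [Fintype A]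
    (N : Network V A) (hc : ∀ a, N.c a = 1) (T : ℕ)
    (y : List A → ℝ) (hy : N.IsDecomposition y)
    (hEA : ∀ θ ∈ Set.Icc (0 : ℝ) (T : ℝ), ∀ g : A → ℝ → ℝ,
      N.IsFlowOverTime (T : ℝ) g → N.arrivedBy g θ ≤ N.arrTR y θ) :
    ∀ y', N.IsDecomposition y' → N.trValue y' (T : ℝ) = N.trValue y (T : ℝ) →
      N.trPeakCost y (T : ℝ) ≤ N.trPeakCost y' (T : ℝ) := by
  intro y' hy' hval
  have harr : ∀ θ ∈ Set.Icc (0 : ℝ) T, N.arrTR y' θ ≤ N.arrTR y θ := fun θ hθ =>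
    arrivedBy_trRate hy' hθ.2 ▸ hEA θ hθ _ (isFlowOverTime_trRate hy' T)
  -- `trValue` is `arrTR` at the horizon
  have hval' : N.arrTR y' T = N.arrTR y T := hval
  refine peakCost_mono (bddAbove_costAt_trRate hc hy' T) fun θ hθ => ?_
  rw [costAt_trRate hc hy hθ.1 hθ.2.le, costAt_trRate hc hy' hθ.1 hθ.2.le, hval']
  linarith [harr θ ⟨hθ.1, hθ.2.le⟩, harr (T - θ) ⟨by linarith [hθ.2], by linarith [hθ.1]⟩]

/-- on a unit-cost network with time horizon `T`, if a maximum-value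
temporally repeated flow (given by its decomposition `y`) has the earliest arrival
property — for every `θ ∈ [0, T]` the amount of flow arrived at the sink by time `θ`
is maximum among all feasible flows over time with horizon `T` — then it has minimum
peak cost among all maximum-value temporally repeated flows with horizon `T`. -/
theorem stmt18 {V A : Type} [DecidableEq V] [DecidableEq A] [Fintype A]
    (N : Network V A) (hc : ∀ a, N.c a = 1) (T : ℕ)
    (y : List A → ℝ) (hy : N.IsDecomposition y)
    (hmaxval : ∀ y', N.IsDecomposition y' →
      N.trValue y' (T : ℝ) ≤ N.trValue y (T : ℝ))
    (hEA : ∀ θ ∈ Set.Icc (0 : ℝ) (T : ℝ), ∀ g : A → ℝ → ℝ,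
      N.IsFlowOverTime (T : ℝ) g → N.arrivedBy g θ ≤ N.arrTR y θ) :
    ∀ y', N.IsDecomposition y' → N.trValue y' (T : ℝ) = N.trValue y (T : ℝ) →
      N.trPeakCost y (T : ℝ) ≤ N.trPeakCost y' (T : ℝ) :=
  stmt18_general N hc T y hy hEA
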